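/- Let n ≥ 1, β > 0, and f(x) = c - b|x - a| with a ∈ ℝⁿ, b > 0, c ∈ ℝ chosen so that ∫_{ℝⁿ} e^{β f(x)} dx = 1. Then e^{-βc} = n! ω_n / (β^n b^n) and Ent(e^{β f}) = ∫ e^{βf} βf dx = βc - n = n log((β k_n / e) b), where k_n = (n! ω_n)^{-1/n}. -/

import Mathlib

/-!
Translating by `a` and integrating in polar coordinates gives
`∫ ‖x‖ ^ k e^{-s‖x‖} dx = n ω_n (n + k - 1)! / s ^ (n + k)`. For `k = 0` the normalization reads
`e^{βc} n! ω_n / (βb)^n = 1`; for `k = 1` the mean of `βb‖x - a‖` under the density `e^{βf}` is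
`n`, so `∫ e^{βf} βf = βc - n`. The logarithmic form is the first identity with `k_n` unfolded.
-/

open MeasureTheory Real

noncomputable section

/-- `ω_n`, the volume of the unit ball of `ℝⁿ`. -/
def omegaN (n : ℕ) : ℝ := (volume (Metric.ball (0 : EuclideanSpace ℝ (Fin n)) 1)).toReal

/-- `k_n = (n! ω_n)^{-1/n}`. -/
def kn (n : ℕ) : ℝ := ((n.factorial : ℝ) * omegaN n) ^ (-(1 / (n : ℝ)))

lemma integral_pow_mul_exp_neg_mul_Ioi (m : ℕ) {r : ℝ} (hr : 0 < r) :
    ∫ t in Set.Ioi (0 : ℝ), t ^ m * Real.exp (-(r * t)) = m.factorial / r ^ (m + 1) := by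
  have hGamma := integral_rpow_mul_exp_neg_mul_Ioi (a := m + 1) (by positivity) hr
  rw [add_sub_cancel_right, Real.Gamma_nat_eq_factorial] at hGamma
  norm_cast at hGamma
  rw [hGamma, one_div_pow, one_div_mul_eq_div]

lemma exp_mul_sub_mul (β b c r : ℝ) :
    Real.exp (β * (c - b * r)) = Real.exp (β * c) * Real.exp (-(β * b * r)) := by
  rw [← Real.exp_add]
  ring_nf

lemma integral_exp_cone {E : Type*} [NormedAddCommGroup E] [MeasurableSpace E] [MeasurableAdd E]
    (μ : Measure E) [μ.IsAddRightInvariant] (β b c : ℝ) (a : E) :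
    ∫ x, Real.exp (β * (c - b * ‖x - a‖)) ∂μ
      = Real.exp (β * c) * ∫ x, Real.exp (-(β * b * ‖x‖)) ∂μ := by
  rw [← integral_const_mul,
    ← integral_sub_right_eq_self (fun x => Real.exp (β * c) * Real.exp (-(β * b * ‖x‖))) a]
  simp_rw [exp_mul_sub_mul]

section Cone

open Module Metric

variable {E : Type*} [NormedAddCommGroup E] [NormedSpace ℝ E] [FiniteDimensional ℝ E]
  [Nontrivial E] [MeasurableSpace E] [BorelSpace E] (μ : Measure E) [μ.IsAddHaarMeasure]

lemma integral_norm_pow_mul_exp_neg_mul_norm (k : ℕ) {s : ℝ} (hs : 0 < s) :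
    ∫ x, ‖x‖ ^ k * Real.exp (-(s * ‖x‖)) ∂μ
      = finrank ℝ E * μ.real (ball 0 1) * (finrank ℝ E - 1 + k).factorial
          / s ^ (finrank ℝ E + k) := by
  have hd : finrank ℝ E - 1 + k + 1 = finrank ℝ E + k := by
    have := finrank_pos (R := ℝ) (M := E)
    omega
  rw [integral_fun_norm_addHaar μ (fun y => y ^ k * Real.exp (-(s * y)))]
  simp_rw [smul_eq_mul, ← mul_assoc, ← pow_add]
  rw [integral_pow_mul_exp_neg_mul_Ioi _ hs, hd, nsmul_eq_mul]
  ring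

lemma integral_exp_neg_mul_norm {s : ℝ} (hs : 0 < s) :
    ∫ x, Real.exp (-(s * ‖x‖)) ∂μ
      = (finrank ℝ E).factorial * μ.real (ball 0 1) / s ^ finrank ℝ E := by
  have := integral_norm_pow_mul_exp_neg_mul_norm μ 0 hs
  simp only [pow_zero, one_mul, add_zero] at this
  rw [this, ← Nat.mul_factorial_pred finrank_pos.ne']
  push_cast
  ring

lemma integral_norm_mul_exp_neg_mul_norm {s : ℝ} (hs : 0 < s) :
    ∫ x, ‖x‖ * Real.exp (-(s * ‖x‖)) ∂μ
      = finrank ℝ E * (∫ x, Real.exp (-(s * ‖x‖)) ∂μ) / s := by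
  have := integral_norm_pow_mul_exp_neg_mul_norm μ 1 hs
  simp only [pow_one] at this
  rw [this, integral_exp_neg_mul_norm μ hs, Nat.sub_add_cancel finrank_pos, pow_succ]
  field_simp

variable {μ} {β b c : ℝ} {a : E}

lemma exp_neg_mul_eq_of_integral_exp_cone_eq_one (hβ : 0 < β) (hb : 0 < b)
    (hnorm : ∫ x, Real.exp (β * (c - b * ‖x - a‖)) ∂μ = 1) :
    Real.exp (-(β * c))
      = (finrank ℝ E).factorial * μ.real (ball 0 1) / (β ^ finrank ℝ E * b ^ finrank ℝ E) := by
  rw [integral_exp_cone] at hnorm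
  rw [Real.exp_neg, inv_eq_of_mul_eq_one_right hnorm, integral_exp_neg_mul_norm μ (by positivity),
    mul_pow]

lemma integral_exp_cone_mul_cone (hβ : 0 < β) (hb : 0 < b)
    (hnorm : ∫ x, Real.exp (β * (c - b * ‖x - a‖)) ∂μ = 1) :
    ∫ x, Real.exp (β * (c - b * ‖x - a‖)) * (β * (c - b * ‖x - a‖)) ∂μ
      = β * c - finrank ℝ E := by
  have hs : 0 < β * b := mul_pos hβ hb
  set Z := ∫ x, Real.exp (-(β * b * ‖x‖)) ∂μ
  have hmass : Real.exp (β * c) * Z = 1 := (integral_exp_cone μ β b c a).symm.trans hnorm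
  have hmoment : ∫ x, ‖x - a‖ * Real.exp (-(β * b * ‖x - a‖)) ∂μ = finrank ℝ E * Z / (β * b) := by
    rw [integral_sub_right_eq_self (fun x => ‖x‖ * Real.exp (-(β * b * ‖x‖))) a,
      integral_norm_mul_exp_neg_mul_norm μ hs]
  have hint : Integrable (fun x => Real.exp (β * (c - b * ‖x - a‖))) μ :=
    .of_integral_ne_zero (by rw [hnorm]; exact one_ne_zero)
  have hint₁ : Integrable (fun x => ‖x - a‖ * Real.exp (-(β * b * ‖x - a‖))) μ :=
    .of_integral_ne_zero <| by
      rw [hmoment]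
      exact div_ne_zero (mul_ne_zero (Nat.cast_ne_zero.2 finrank_pos.ne')
        (right_ne_zero_of_mul_eq_one hmass)) hs.ne'
  calc ∫ x, Real.exp (β * (c - b * ‖x - a‖)) * (β * (c - b * ‖x - a‖)) ∂μ
      = ∫ x, β * c * Real.exp (β * (c - b * ‖x - a‖))
          - β * b * Real.exp (β * c) * (‖x - a‖ * Real.exp (-(β * b * ‖x - a‖))) ∂μ := by
        congr 1 with x
        rw [exp_mul_sub_mul]
        ring
    _ = β * c * 1 - β * b * Real.exp (β * c) * (finrank ℝ E * Z / (β * b)) := by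
        rw [integral_sub (hint.const_mul _) (hint₁.const_mul _), integral_const_mul,
          integral_const_mul, hnorm, hmoment]
    _ = β * c - finrank ℝ E := by
        field_simp
        linear_combination -(finrank ℝ E : ℝ) * hmass

end Cone

lemma factorial_mul_omegaN_pos (n : ℕ) : 0 < (n.factorial : ℝ) * omegaN n :=
  mul_pos (Nat.cast_pos.2 n.factorial_pos)
    (ENNReal.toReal_pos (Metric.measure_ball_pos volume 0 one_pos).ne' measure_ball_lt_top.ne)

lemma kn_pos (n : ℕ) : 0 < kn n :=
  Real.rpow_pos_of_pos (factorial_mul_omegaN_pos n) _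

lemma log_kn (n : ℕ) : Real.log (kn n) = -Real.log ((n.factorial : ℝ) * omegaN n) / n := by
  rw [kn, Real.log_rpow (factorial_mul_omegaN_pos n)]
  ring

lemma sub_natCast_eq_mul_log_kn {n : ℕ} (hn : n ≠ 0) {β b t : ℝ} (hβ : 0 < β) (hb : 0 < b)
    (ht : Real.exp (-t) = (n.factorial : ℝ) * omegaN n / (β ^ n * b ^ n)) :
    t - n = n * Real.log (β * kn n / Real.exp 1 * b) := by
  have hk := kn_pos n
  have hlog := congrArg Real.log ht
  rw [Real.log_exp, Real.log_div (factorial_mul_omegaN_pos n).ne' (by positivity), ← mul_pow,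
    Real.log_pow, Real.log_mul hβ.ne' hb.ne'] at hlog
  rw [Real.log_mul (by positivity) hb.ne', Real.log_div (by positivity) (Real.exp_ne_zero 1),
    Real.log_exp, Real.log_mul hβ.ne' hk.ne', log_kn]
  field_simp
  linarith

/-- For the cone function `f(x) = c - b|x - a|` normalized by `∫ e^{βf} = 1`:
`e^{-βc} = n! ω_n / (β^n b^n)` and `Ent(e^{βf}) = βc - n = n log((β k_n / e) b)`. -/
theorem entropy_of_cone (n : ℕ) (hn : 1 ≤ n) (β b c : ℝ) (hβ : 0 < β) (hb : 0 < b)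
    (a : EuclideanSpace ℝ (Fin n))
    (hnorm : (∫ x : EuclideanSpace ℝ (Fin n), Real.exp (β * (c - b * ‖x - a‖))) = 1) :
    Real.exp (-(β * c)) = (n.factorial : ℝ) * omegaN n / (β ^ n * b ^ n) ∧
    (∫ x : EuclideanSpace ℝ (Fin n),
        Real.exp (β * (c - b * ‖x - a‖)) * (β * (c - b * ‖x - a‖))) = β * c - n ∧
    β * c - n = n * Real.log (β * kn n / Real.exp 1 * b) := by
  have : Nonempty (Fin n) := ⟨⟨0, hn⟩⟩
  have hexp := exp_neg_mul_eq_of_integral_exp_cone_eq_one hβ hb hnorm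
  rw [finrank_euclideanSpace_fin] at hexp
  have hentropy := integral_exp_cone_mul_cone hβ hb hnorm
  rw [finrank_euclideanSpace_fin] at hentropy
  exact ⟨hexp, hentropy, sub_natCast_eq_mul_log_kn (by omega) hβ hb hexp⟩
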